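/- If X is finitely representable in Y, then l₂(X) is finitely representable in l₂(Y). -/

import Mathlib

/-! Finite representability of `X` in `Y` amounts to: on every finite-dimensional `A ≤ X` there is
a linear map `φ : A → Y` with `‖φ z‖ ≤ ‖z‖ ≤ (1 + ε) ‖φ z‖`. For a finite-dimensional
`A ≤ l₂(X)` choose such a map on each coordinate image `{a i | a ∈ A} ≤ X` and apply them
coordinatewise; both bounds hold in every coordinate, hence in the `l₂` norm, which is monotone
in the norms of the coordinates. -/

open scoped ENNReal

/-- `X` is finitely representable in `Y`. -/
def FinRep (X Y : Type*) [NormedAddCommGroup X] [NormedSpace ℝ X]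
    [NormedAddCommGroup Y] [NormedSpace ℝ Y] : Prop :=
  ∀ ε : ℝ, 0 < ε → ∀ A : Submodule ℝ X, FiniteDimensional ℝ A →
    ∃ B : Submodule ℝ Y, ∃ u : A ≃L[ℝ] B,
      ‖(u : A →L[ℝ] B)‖ * ‖(u.symm : B →L[ℝ] A)‖ ≤ 1 + ε

section Distortion

variable {E F : Type*} [NormedAddCommGroup E] [NormedSpace ℝ E]
  [NormedAddCommGroup F] [NormedSpace ℝ F]

theorem ContinuousLinearEquiv.exists_linearMap_norm_le (u : E ≃L[ℝ] F) :
    ∃ φ : E →ₗ[ℝ] F, ∀ z, ‖φ z‖ ≤ ‖z‖ ∧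
      ‖z‖ ≤ ‖(u : E →L[ℝ] F)‖ * ‖(u.symm : F →L[ℝ] E)‖ * ‖φ z‖ := by
  refine ⟨(‖(u : E →L[ℝ] F)‖⁻¹ • (u : E →L[ℝ] F) : E →L[ℝ] F), fun z => ?_⟩
  have hz : ‖z‖ ≤ ‖(u.symm : F →L[ℝ] E)‖ * ‖u z‖ := by
    simpa using (u.symm : F →L[ℝ] E).le_opNorm (u z)
  rcases (norm_nonneg (u : E →L[ℝ] F)).eq_or_lt with hu | hu
  · have : u z = 0 := by simpa [← hu] using (u : E →L[ℝ] F).le_opNorm z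
    obtain rfl : z = 0 := by simpa [this] using hz
    simp
  · simp only [LinearMap.smul_apply, ContinuousLinearMap.toLinearMap_smul,
      ContinuousLinearMap.coe_coe, norm_smul, norm_inv, norm_norm]
    constructor
    · rw [inv_mul_le_iff₀ hu]
      exact (u : E →L[ℝ] F).le_opNorm z
    · calc ‖z‖ ≤ ‖(u.symm : F →L[ℝ] E)‖ * ‖u z‖ := hz
        _ = _ := by field_simp; rfl

theorem LinearMap.exists_continuousLinearEquiv_of_norm_le (φ : E →ₗ[ℝ] F) {C : ℝ} (hC : 0 ≤ C)
    (hφ : ∀ z, ‖φ z‖ ≤ ‖z‖ ∧ ‖z‖ ≤ C * ‖φ z‖) :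
    ∃ B : Submodule ℝ F, ∃ u : E ≃L[ℝ] B,
      ‖(u : E →L[ℝ] B)‖ * ‖(u.symm : B →L[ℝ] E)‖ ≤ C := by
  have hinj : Function.Injective φ := by
    refine (injective_iff_map_eq_zero φ).2 fun z hz => norm_le_zero_iff.1 ?_
    simpa [hz] using (hφ z).2
  let e := LinearEquiv.ofInjective φ hinj
  have h_to (z : E) : ‖e z‖ ≤ 1 * ‖z‖ := (hφ z).1.trans_eq (one_mul _).symm
  have h_inv (y : LinearMap.range φ) : ‖e.symm y‖ ≤ C * ‖y‖ := by
    obtain ⟨z, rfl⟩ := e.surjective y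
    rw [e.symm_apply_apply]
    exact (hφ z).2
  let u := e.toContinuousLinearEquivOfBounds 1 C h_to h_inv
  refine ⟨LinearMap.range φ, u, ?_⟩
  have hu : ‖(u : E →L[ℝ] LinearMap.range φ)‖ ≤ 1 :=
    ContinuousLinearMap.opNorm_le_bound _ zero_le_one h_to
  have hu_symm : ‖(u.symm : LinearMap.range φ →L[ℝ] E)‖ ≤ C :=
    ContinuousLinearMap.opNorm_le_bound _ hC h_inv
  simpa using mul_le_mul hu hu_symm (ContinuousLinearMap.opNorm_nonneg _) zero_le_one

end Distortion

theorem finRep_iff_exists_linearMap {X Y : Type*} [NormedAddCommGroup X] [NormedSpace ℝ X]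
    [NormedAddCommGroup Y] [NormedSpace ℝ Y] :
    FinRep X Y ↔ ∀ ε : ℝ, 0 < ε → ∀ A : Submodule ℝ X, FiniteDimensional ℝ A →
      ∃ φ : A →ₗ[ℝ] Y, ∀ z, ‖φ z‖ ≤ ‖z‖ ∧ ‖z‖ ≤ (1 + ε) * ‖φ z‖ := by
  refine forall₂_congr fun ε hε => forall₂_congr fun A _ => ⟨?_, ?_⟩
  · rintro ⟨B, u, hu⟩
    obtain ⟨φ, hφ⟩ := u.exists_linearMap_norm_le
    exact ⟨B.subtype ∘ₗ φ, fun z =>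
      ⟨(hφ z).1, (hφ z).2.trans (mul_le_mul_of_nonneg_right hu (norm_nonneg _))⟩⟩
  · rintro ⟨φ, hφ⟩
    exact φ.exists_continuousLinearEquiv_of_norm_le (by positivity) hφ

namespace lp

variable {ι 𝕜 V : Type*} {E F : ι → Type*} [∀ i, NormedAddCommGroup (E i)]
  [∀ i, NormedAddCommGroup (F i)] {p : ℝ≥0∞}

section PiLinearMap

variable [NormedRing 𝕜] [∀ i, Module 𝕜 (F i)] [∀ i, IsBoundedSMul 𝕜 (F i)]
  [AddCommMonoid V] [Module 𝕜 V]

def piLinearMap (φ : ∀ i, V →ₗ[𝕜] F i) (hφ : ∀ v, Memℓp (fun i => φ i v) p) :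
    V →ₗ[𝕜] lp F p where
  toFun v := ⟨fun i => φ i v, hφ v⟩
  map_add' v w := lp.ext <| funext fun i => map_add (φ i) v w
  map_smul' c v := lp.ext <| funext fun i => map_smul (φ i) c v

end PiLinearMap

theorem norm_le_mul_norm_of_forall [∀ i, NormedSpace ℝ (F i)] (hp : p ≠ 0) {C : ℝ} (hC : 0 ≤ C)
    {x : lp E p} {y : lp F p} (h : ∀ i, ‖x i‖ ≤ C * ‖y i‖) : ‖x‖ ≤ C * ‖y‖ :=
  calc ‖x‖ ≤ ‖C • y‖ := lp.norm_mono hp fun i => by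
        simpa [lp.coeFn_smul, norm_smul, abs_of_nonneg hC] using h i
    _ = C * ‖y‖ := by rw [lp.norm_const_smul hp, Real.norm_of_nonneg hC]

end lp

theorem l2_sum_mono_finRep_general (X Y : Type*)
    [NormedAddCommGroup X] [NormedSpace ℝ X]
    [NormedAddCommGroup Y] [NormedSpace ℝ Y]
    (h : FinRep X Y) :
    FinRep (lp (fun _ : ℕ => X) 2) (lp (fun _ : ℕ => Y) 2) := by
  rw [finRep_iff_exists_linearMap] at h ⊢
  intro ε hε A _
  choose φ hφ using fun i : ℕ => h ε hε (A.map (lp.evalₗ (𝕜 := ℝ) _ 2 i)) inferInstance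
  let ψ (i : ℕ) : A →ₗ[ℝ] Y := φ i ∘ₗ (lp.evalₗ _ 2 i).submoduleMap A
  have hψ (a : A) (i : ℕ) : ‖ψ i a‖ ≤ ‖(a : lp (fun _ : ℕ => X) 2) i‖ ∧
      ‖(a : lp (fun _ : ℕ => X) 2) i‖ ≤ (1 + ε) * ‖ψ i a‖ :=
    hφ i ((lp.evalₗ _ 2 i).submoduleMap A a)
  let Φ := lp.piLinearMap ψ fun a =>
    (lp.memℓp (a : lp (fun _ : ℕ => X) 2)).mono' fun i => (hψ a i).1
  exact ⟨Φ, fun a => ⟨lp.norm_mono two_ne_zero fun i => (hψ a i).1,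
    lp.norm_le_mul_norm_of_forall two_ne_zero (by positivity) fun i => (hψ a i).2⟩⟩

/-- If `X` is finitely representable in `Y`, then `l₂(X)` is finitely
representable in `l₂(Y)`. -/
theorem l2_sum_mono_finRep (X Y : Type*)
    [NormedAddCommGroup X] [NormedSpace ℝ X] [CompleteSpace X]
    [NormedAddCommGroup Y] [NormedSpace ℝ Y] [CompleteSpace Y]
    (h : FinRep X Y) :
    FinRep (lp (fun _ : ℕ => X) 2) (lp (fun _ : ℕ => Y) 2) :=
  l2_sum_mono_finRep_general X Y h
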